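/- arXiv:2109.00241 — 2 statements merged into one kernel-verified Lean document; each statement's English description precedes it below -/
import Mathlib

section
/- The family (K_{1,0}(w)), indexed by all nonempty words w over the alphabet {2,3}, is linearly independent over ℚ in A; that is, the zinbiel subalgebra of A generated by δ_{(1,0)} and δ_{(1,0,0)} is free on these two generators. -/
/-- Words over the alphabet `{0,1}`, encoded with `false` = `0` and `true` = `1`. -/
abbrev Word : Type := List Bool

/-- The ℚ-vector space `A` of finitely supported functions on words over `{0,1}`. -/
abbrev A01 : Type := Word →₀ ℚ

/-- The basis element `δ_x` of `A` attached to a word `x`. -/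
noncomputable def δ (x : Word) : A01 := Finsupp.single x 1

/-- Prepend the letter `a` to every word of a formal sum. -/
noncomputable def prependLetter (a : Bool) (f : A01) : A01 :=
  Finsupp.mapDomain (List.cons a) f

/-- The shuffle product of two words, as an element of `A`. -/
noncomputable def shuffle : Word → Word → A01
  | [], y => δ y
  | a :: x, [] => δ (a :: x)
  | a :: x, b :: y =>
      prependLetter a (shuffle x (b :: y)) + prependLetter b (shuffle (a :: x) y)
  termination_by x y => x.length + y.length

/-- The half-shuffle product on basis words: `δ_{a::x} ≺ δ_y = a·(x ш y)`, `δ_[] ≺ δ_y = 0`. -/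
noncomputable def halfWord : Word → Word → A01
  | [], _ => 0
  | a :: x, y => prependLetter a (shuffle x y)

/-- The half-shuffle (zinbiel) product `≺` on `A`, extended bilinearly from basis words. -/
noncomputable def half (f g : A01) : A01 :=
  f.sum fun x c => g.sum fun y d => (c * d) • halfWord x y

/-- The right-parenthesized product `K(a_1, …, a_n) = a_1 ≺ (a_2 ≺ (⋯ ≺ a_n))`,
with `K(a_n) = a_n`, and `δ_[]` (the shuffle unit) for the empty list. -/
noncomputable def Klist : List A01 → A01
  | [] => δ []
  | [a] => a
  | a :: b :: l => half a (Klist (b :: l))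

/-- The generators `z_2 = δ_{(1,0)}` and `z_3 = u·δ_{(1,0,0)} + v·δ_{(1,1,0)}`;
letters of the alphabet `{2,3}` are encoded with `false` = `2` and `true` = `3`. -/
noncomputable def zgen (u v : ℚ) : Bool → A01
  | false => δ [true, false]
  | true => u • δ [true, false, false] + v • δ [true, true, false]

/-- `K_{u,v}(w)` for a word `w` over `{2,3}` (encoded with `false` = `2`, `true` = `3`). -/
noncomputable def Kuv (u v : ℚ) (w : List Bool) : A01 :=
  Klist (w.map (zgen u v))

/-- The block substitution `2 ↦ (1,0)`, `3 ↦ (1,0,0)`. -/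
def blocks0 (c : Bool) : Word := if c then [true, false, false] else [true, false]

/-- The block substitution `2 ↦ (1,0)`, `3 ↦ (1,1,0)`. -/
def blocks1 (c : Bool) : Word := if c then [true, true, false] else [true, false]

/-- `cat₀(w)`: substitute `2 ↦ (1,0)`, `3 ↦ (1,0,0)` and concatenate. -/
def cat0 (w : List Bool) : Word := (w.map blocks0).flatten

/-- `cat₁(w)`: substitute `2 ↦ (1,0)`, `3 ↦ (1,1,0)` and concatenate. -/
def cat1 (w : List Bool) : Word := (w.map blocks1).flatten

/-- A good-shuffle realizing the word `x` from the words `ws = (w^1, …, w^n)`: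
a partition `S` of the positions of `x`, reading `x` along `S j` gives `w^j`,
and the minima of the parts are in increasing order. -/
def GoodShuffle (ws : List Word) (x : Word)
    (S : Fin ws.length → Finset (Fin x.length)) : Prop :=
  (∀ p : Fin x.length, ∃! j, p ∈ S j) ∧
  (∀ j, ((S j).sort (· ≤ ·)).map x.get = ws.get j) ∧
  (∀ j k, j < k → (S j).min < (S k).min)

/-- The weight of a word over `{2,3}`: the sum of its letters. -/
def wt (w : List Bool) : ℕ := (w.map fun c => if c then 3 else 2).sum

/-!
Order words over `{0,1}` lexicographically. Since `K_{1,0}(c w) = 1 · (0^k ш K_{1,0}(w))` with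
`k = 1, 2` for `c = 2, 3`, and the lex-least word of `0^k ш y` is `0^k y` (with coefficient `1`
when `y` begins with `1`), induction on `w` shows that the lex-least word in the support of
`K_{1,0}(w)` is `cat₀(w)`. The blocks `10`, `100` form a prefix code, so `cat₀` is injective and
the family is triangular with respect to the lexicographic order.
-/

open Finsupp

theorem linearIndependent_of_isLeast_support {ι α R : Type*} [LinearOrder α] [Ring R]
    [NoZeroDivisors R] (f : ι → α →₀ R) {φ : ι → α} (hφ : Function.Injective φ)
    (hf : ∀ i, IsLeast ((f i).support : Set α) (φ i)) : LinearIndependent R f := by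
  rw [linearIndependent_iff]
  intro l hl
  by_contra hne
  obtain ⟨i₀, hi₀, hmin⟩ := l.support.exists_min_image φ (support_nonempty_iff.mpr hne)
  have hcoeff : linearCombination R f l (φ i₀) = l i₀ * f i₀ (φ i₀) := by
    rw [linearCombination_apply, Finsupp.sum_apply, Finsupp.sum, Finset.sum_eq_single i₀]
    · rfl
    · intro i hi hii₀
      suffices f i (φ i₀) = 0 by simp [this]
      by_contra hfi
      exact hii₀ (hφ (le_antisymm ((hf i).2 (mem_support_iff.mpr hfi)) (hmin i hi)))
    · intro h; simp [notMem_support_iff.mp h]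
  rw [hl, Finsupp.zero_apply] at hcoeff
  exact mul_ne_zero (mem_support_iff.mp hi₀) (mem_support_iff.mp (hf i₀).1) hcoeff.symm

theorem isLeast_support_sum_smul {α β R : Type*} [PartialOrder α] [Preorder β] [Semiring R]
    [NoZeroDivisors R] (g : α →₀ R) (h : α → β →₀ R) {ψ : α → β}
    (hψ : StrictMono ψ) (hlow : ∀ y, ψ y ∈ lowerBounds ((h y).support : Set β)) {m : α}
    (hg : IsLeast (g.support : Set α) m) (hm : ψ m ∈ (h m).support) :
    IsLeast ((g.sum fun y d => d • h y).support : Set β) (ψ m) := by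
  constructor
  · have hcoeff : (g.sum fun y d => d • h y) (ψ m) = g m * h m (ψ m) := by
      rw [Finsupp.sum_apply, Finsupp.sum, Finset.sum_eq_single m]
      · rfl
      · intro y hy hym
        have hlt : ψ m < ψ y := hψ (lt_of_le_of_ne (hg.2 hy) (Ne.symm hym))
        have : h y (ψ m) = 0 :=
          notMem_support_iff.mp fun hmem => (hlt.trans_le (hlow y hmem)).false
        simp [this]
      · intro hm'; simp [notMem_support_iff.mp hm']
    simpa [hcoeff] using And.intro (mem_support_iff.mp hg.1) (mem_support_iff.mp hm)
  · classical
    intro x hx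
    obtain ⟨y, hy, hxy⟩ := Finset.mem_biUnion.mp (support_sum hx)
    exact (hψ.monotone (hg.2 hy)).trans (hlow y (support_smul hxy))

theorem shuffle_nil_left (y : Word) : shuffle [] y = δ y := by rw [shuffle]

theorem shuffle_nil_right (x : Word) : shuffle x [] = δ x := by
  cases x <;> rw [shuffle]

theorem shuffle_cons_cons (a b : Bool) (x y : Word) :
    shuffle (a :: x) (b :: y) =
      prependLetter a (shuffle x (b :: y)) + prependLetter b (shuffle (a :: x) y) := by
  rw [shuffle]

theorem mem_support_prependLetter {a : Bool} {f : A01} {x : Word} :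
    x ∈ (prependLetter a f).support ↔ ∃ t ∈ f.support, a :: t = x := by
  rw [prependLetter, mapDomain_support_of_injective List.cons_injective, Finset.mem_image]

theorem prependLetter_apply_cons (a : Bool) (f : A01) (z : Word) :
    prependLetter a f (a :: z) = f z :=
  mapDomain_apply List.cons_injective f z

theorem cons_mem_lowerBounds_support_prependLetter {a : Bool} {f : A01} {m : Word}
    (hm : m ∈ lowerBounds (f.support : Set Word)) :
    a :: m ∈ lowerBounds ((prependLetter a f).support : Set Word) := by
  rintro _ hx
  obtain ⟨t, ht, rfl⟩ := mem_support_prependLetter.mp hx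
  exact List.cons_le_cons a (hm ht)

theorem replicate_append_mem_lowerBounds_support_shuffle (k : ℕ) (y : Word) :
    List.replicate k false ++ y ∈
      lowerBounds ((shuffle (List.replicate k false) y).support : Set Word) := by
  induction y generalizing k with
  | nil =>
    rw [shuffle_nil_right, List.append_nil]
    simp [δ, lowerBounds]
  | cons b y ihy =>
    induction k with
    | zero => simp [shuffle_nil_left, δ, lowerBounds]
    | succ k ihk =>
      intro z hz
      rw [List.replicate_succ, shuffle_cons_cons] at hz
      rcases Finset.mem_union.mp (support_add hz) with hz | hz
      · obtain ⟨t, ht, rfl⟩ := mem_support_prependLetter.mp hz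
        exact List.cons_le_cons false (ihk ht)
      · obtain ⟨t, ht, rfl⟩ := mem_support_prependLetter.mp hz
        cases b with
        | false =>
          have hshift : List.replicate (k + 1) false ++ false :: y =
              false :: (List.replicate (k + 1) false ++ y) := by
            rw [← List.singleton_append, ← List.append_assoc, ← List.replicate_succ',
              List.replicate_succ, List.cons_append]
          rw [← List.replicate_succ] at ht
          rw [hshift]
          exact List.cons_le_cons false (ihy (k + 1) ht)
        | true => exact (List.cons_lt_cons_iff.mpr (Or.inl rfl)).le

theorem shuffle_replicate_apply_replicate_append (k : ℕ) (y : Word) :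
    shuffle (List.replicate k false) (true :: y) (List.replicate k false ++ true :: y) = 1 := by
  induction k with
  | zero => simp [shuffle_nil_left, δ]
  | succ k ih =>
    have hzero : prependLetter true (shuffle (List.replicate (k + 1) false) y)
        (false :: (List.replicate k false ++ true :: y)) = 0 :=
      notMem_support_iff.mp fun h => by simpa using mem_support_prependLetter.mp h
    rw [List.replicate_succ, shuffle_cons_cons, Finsupp.add_apply, List.cons_append,
      prependLetter_apply_cons, ih, ← List.replicate_succ, hzero, add_zero]

theorem half_delta_cons (a : Bool) (x : Word) (g : A01) :
    half (δ (a :: x)) g = g.sum fun y d => d • prependLetter a (shuffle x y) := by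
  rw [half, δ, sum_single_index] <;> simp [halfWord]

theorem blocks0_eq_cons_replicate (c : Bool) :
    blocks0 c = true :: List.replicate (c.toNat + 1) false := by
  cases c <;> rfl

theorem zgen_one_zero (c : Bool) : zgen 1 0 c = δ (blocks0 c) := by
  cases c <;> simp [zgen, blocks0]

theorem Kuv_cons_cons (u v : ℚ) (c c' : Bool) (w : List Bool) :
    Kuv u v (c :: c' :: w) = half (zgen u v c) (Kuv u v (c' :: w)) :=
  rfl

theorem cat0_nil : cat0 [] = [] := rfl

theorem cat0_cons (c : Bool) (w : List Bool) : cat0 (c :: w) = blocks0 c ++ cat0 w := by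
  simp [cat0]

theorem cat0_ne_false_cons (w : List Bool) (t : Word) : cat0 w ≠ false :: t := by
  cases w with
  | nil => simp [cat0_nil]
  | cons c w => simp [cat0_cons, blocks0_eq_cons_replicate]

theorem cat0_injective : Function.Injective cat0 := by
  intro w w' h
  induction w generalizing w' with
  | nil => cases w' with
    | nil => rfl
    | cons c' w' => simp [cat0_nil, cat0_cons, blocks0_eq_cons_replicate] at h
  | cons c w ih => cases w' with
    | nil => simp [cat0_nil, cat0_cons, blocks0_eq_cons_replicate] at h
    | cons c' w' =>
      cases c <;> cases c' <;> simp [cat0_cons, blocks0] at h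
      · rw [ih h]
      · exact absurd h (cat0_ne_false_cons _ _)
      · exact absurd h.symm (cat0_ne_false_cons _ _)
      · rw [ih h]

theorem isLeast_support_Kuv_one_zero_cons (c : Bool) (w : List Bool) :
    IsLeast ((Kuv 1 0 (c :: w)).support : Set Word) (cat0 (c :: w)) := by
  induction w generalizing c with
  | nil =>
    rw [show Kuv 1 0 [c] = δ (blocks0 c) from zgen_one_zero c, cat0_cons, cat0_nil,
      List.append_nil, δ, support_single _ one_ne_zero, Finset.coe_singleton]
    exact isLeast_singleton
  | cons c' w ih =>
    set r := List.replicate (c.toNat + 1) false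
    obtain ⟨t, ht⟩ : ∃ t, cat0 (c' :: w) = true :: t :=
      ⟨_, by rw [cat0_cons, blocks0_eq_cons_replicate, List.cons_append]⟩
    have hψ : StrictMono fun y : Word => true :: (r ++ y) := fun y y' h => by
      simpa using List.append_left_lt (l₁ := r) h
    have hm : true :: (r ++ cat0 (c' :: w)) ∈
        (prependLetter true (shuffle r (cat0 (c' :: w)))).support := by
      rw [mem_support_iff, prependLetter_apply_cons, ht,
        shuffle_replicate_apply_replicate_append]
      exact one_ne_zero
    rw [Kuv_cons_cons, zgen_one_zero, blocks0_eq_cons_replicate, half_delta_cons,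
      cat0_cons, blocks0_eq_cons_replicate, List.cons_append]
    exact isLeast_support_sum_smul _ _ hψ
      (fun y => cons_mem_lowerBounds_support_prependLetter
        (replicate_append_mem_lowerBounds_support_shuffle _ y)) (ih c') hm

/-- The family `K_{1,0}(w)`, indexed by nonempty words `w` over `{2,3}`
(encoded with `false` = `2`, `true` = `3`), is linearly independent over `ℚ` in `A`:
the zinbiel subalgebra generated by `δ_{(1,0)}` and `δ_{(1,0,0)}` is free on these generators. -/
theorem K10_linearIndependent :
    LinearIndependent ℚ (fun w : {l : List Bool // l ≠ []} => Kuv 1 0 w.1) := by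
  refine linearIndependent_of_isLeast_support _ (φ := fun w => cat0 w.1)
    (cat0_injective.comp Subtype.val_injective) fun ⟨w, hw⟩ => ?_
  obtain ⟨c, w, rfl⟩ := List.exists_cons_of_ne_nil hw
  exact isLeast_support_Kuv_one_zero_cons c w
end

section
/- Let w be a word over {2,3} with k letters equal to 2 and ℓ letters equal to 3. Then the component of K_{u,v}(w) supported on words over {0,1} containing exactly k + 2ℓ letters 1 (the maximal possible number of 1's) equals v^ℓ · K_{0,1}(w). In particular, if v ≠ 0 this leading term is a nonzero multiple of K_{0,1}(w). -/
/-! Counting letters `1` grades `A`, and `ш` and `≺` add degrees. Hence the top-degree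
component of `f ≺ g`, for `f`, `g` of degrees at most `a`, `b`, is the half-shuffle of the
degree-`a` part of `f` with the degree-`b` part of `g`. The generator `z_2` has degree `1`, and
`z_3` has degree at most `2` with degree-`2` part `v • δ_{(1,1,0)}`, which is `v` times `z_3` at
`(u, v) = (0, 1)`. Induction on `w` along `K(c :: w) = z_c ≺ K(w)` gives the claim. -/

theorem exists_of_mem_support_prependLetter {a : Bool} {f : A01} {z : Word}
    (hz : z ∈ (prependLetter a f).support) : ∃ z' ∈ f.support, a :: z' = z :=
  Finset.mem_image.1 (Finsupp.mapDomain_support hz)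

theorem count_of_mem_support_shuffle (x y : Word) {z : Word} (hz : z ∈ (shuffle x y).support) :
    z.count true = x.count true + y.count true := by
  induction x, y using shuffle.induct generalizing z with
  | case1 y =>
    rw [shuffle, δ, Finsupp.support_single _ one_ne_zero, Finset.mem_singleton] at hz
    simp [hz]
  | case2 a x =>
    rw [shuffle, δ, Finsupp.support_single _ one_ne_zero, Finset.mem_singleton] at hz
    simp [hz]
  | case3 a x b y ih₁ ih₂ =>
    rw [shuffle] at hz
    rcases Finset.mem_union.1 (Finsupp.support_add hz) with h | h <;>
      obtain ⟨z', hz', rfl⟩ := exists_of_mem_support_prependLetter h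
    · have := ih₁ hz'
      simp only [List.count_cons] at this ⊢
      omega
    · have := ih₂ hz'
      simp only [List.count_cons] at this ⊢
      omega

theorem count_of_mem_support_halfWord (x y : Word) {z : Word}
    (hz : z ∈ (halfWord x y).support) : z.count true = x.count true + y.count true := by
  cases x with
  | nil => simp [halfWord] at hz
  | cons a x =>
    obtain ⟨z', hz', rfl⟩ := exists_of_mem_support_prependLetter hz
    have := count_of_mem_support_shuffle x y hz'
    simp only [List.count_cons] at this ⊢
    omega

theorem exists_of_mem_support_half {f g : A01} {z : Word} (hz : z ∈ (half f g).support) :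
    ∃ x ∈ f.support, ∃ y ∈ g.support, z.count true = x.count true + y.count true := by
  obtain ⟨x, hx, hz⟩ := Finset.mem_biUnion.1 (Finsupp.support_sum hz)
  obtain ⟨y, hy, hz⟩ := Finset.mem_biUnion.1 (Finsupp.support_sum hz)
  exact ⟨x, hx, y, hy, count_of_mem_support_halfWord x y (Finsupp.support_smul hz)⟩

noncomputable def halfₗ : A01 →ₗ[ℚ] A01 →ₗ[ℚ] A01 :=
  Finsupp.linearCombination ℚ fun x => Finsupp.linearCombination ℚ (halfWord x)

theorem half_eq_halfₗ (f g : A01) : half f g = halfₗ f g := by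
  simp [half, halfₗ, Finsupp.linearCombination_apply, Finsupp.sum, Finset.smul_sum, smul_smul]

theorem half_add_left (f₁ f₂ g : A01) : half (f₁ + f₂) g = half f₁ g + half f₂ g := by
  simp only [half_eq_halfₗ, map_add, LinearMap.add_apply]

theorem half_add_right (f g₁ g₂ : A01) : half f (g₁ + g₂) = half f g₁ + half f g₂ := by
  simp only [half_eq_halfₗ, map_add]

theorem half_smul_left (c : ℚ) (f g : A01) : half (c • f) g = c • half f g := by
  simp only [half_eq_halfₗ, map_smul, LinearMap.smul_apply]

theorem half_smul_right (c : ℚ) (f g : A01) : half f (c • g) = c • half f g := by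
  simp only [half_eq_halfₗ, map_smul]

theorem half_delta (x y : Word) : half (δ x) (δ y) = halfWord x y := by
  simp [half, δ]

theorem halfWord_nil_right (x : Word) : halfWord x [] = if x = [] then 0 else δ x := by
  rcases x with _ | ⟨a, _ | ⟨b, x⟩⟩ <;>
    simp [halfWord, shuffle, prependLetter, δ, Finsupp.mapDomain_single]

theorem half_delta_nil (f : A01) : half f (δ []) = f.erase [] := by
  induction f using Finsupp.induction_linear with
  | zero => simp [half]
  | add f g hf hg => rw [half_add_left, hf, hg, Finsupp.erase_add]
  | single x c =>
    rw [← Finsupp.smul_single_one, ← δ, half_smul_left, half_delta, halfWord_nil_right]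
    split_ifs with hx
    · rw [hx, smul_zero, δ, Finsupp.smul_single_one, Finsupp.erase_single]
    · rw [δ, Finsupp.smul_single_one, Finsupp.erase_single_ne (Ne.symm hx)]

theorem Kuv_cons (u v : ℚ) (c : Bool) (w : List Bool) :
    Kuv u v (c :: w) = half (zgen u v c) (Kuv u v w) := by
  cases w with
  | cons d w => rfl
  | nil =>
    -- `K(a) = a` agrees with `a ≺ δ_[]` because `z_c` has no constant term.
    have hnil : [] ∉ (zgen u v c).support := by cases c <;> simp [zgen, δ]
    exact ((half_delta_nil _).trans (Finsupp.erase_of_notMem_support hnil)).symm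

theorem filter_count_half_eq_self {f g : A01} {n : ℕ}
    (h : ∀ x ∈ f.support, ∀ y ∈ g.support, x.count true + y.count true = n) :
    (half f g).filter (fun z => z.count true = n) = half f g := by
  refine (Finsupp.filter_eq_self_iff _ _).2 fun z hz => ?_
  obtain ⟨x, hx, y, hy, hxy⟩ := exists_of_mem_support_half (Finsupp.mem_support_iff.2 hz)
  exact hxy.trans (h x hx y hy)

theorem filter_count_half_eq_zero {f g : A01} {n : ℕ}
    (h : ∀ x ∈ f.support, ∀ y ∈ g.support, x.count true + y.count true ≠ n) :
    (half f g).filter (fun z => z.count true = n) = 0 := by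
  refine (Finsupp.filter_eq_zero_iff _ _).2 fun z hz => by_contra fun hz0 => ?_
  obtain ⟨x, hx, y, hy, hxy⟩ := exists_of_mem_support_half (Finsupp.mem_support_iff.2 hz0)
  exact h x hx y hy (hxy.symm.trans hz)

theorem filter_count_half {f g : A01} {a b : ℕ} (hf : ∀ x ∈ f.support, x.count true ≤ a)
    (hg : ∀ y ∈ g.support, y.count true ≤ b) :
    (half f g).filter (fun z => z.count true = a + b) =
      half (f.filter fun x => x.count true = a) (g.filter fun y => y.count true = b) := by
  conv_lhs => rw [← f.filter_add_filter_not (fun x => x.count true = a),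
    ← g.filter_add_filter_not (fun y => y.count true = b)]
  simp only [half_add_left, half_add_right, Finsupp.filter_add]
  rw [filter_count_half_eq_self, filter_count_half_eq_zero, filter_count_half_eq_zero,
    filter_count_half_eq_zero, add_zero, add_zero, add_zero]
  all_goals
    simp only [Finsupp.support_filter, Finset.mem_filter]
    grind

def maxOnes (w : List Bool) : ℕ := w.count false + 2 * w.count true

theorem maxOnes_cons (c : Bool) (w : List Bool) : maxOnes (c :: w) = maxOnes [c] + maxOnes w := by
  cases c <;> simp [maxOnes] <;> omega

theorem count_le_of_mem_support_zgen (u v : ℚ) (c : Bool) :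
    ∀ z ∈ (zgen u v c).support, z.count true ≤ maxOnes [c] := by
  intro z hz
  cases c with
  | false =>
    rw [zgen, δ, Finsupp.support_single _ one_ne_zero, Finset.mem_singleton] at hz
    simp [hz, maxOnes]
  | true =>
    rw [zgen] at hz
    rcases Finset.mem_union.1 (Finsupp.support_add hz) with h | h <;>
      rw [Finset.mem_singleton.1 (Finsupp.support_single_subset (Finsupp.support_smul h))] <;>
      simp [maxOnes]

theorem filter_zgen (u v : ℚ) (c : Bool) :
    (zgen u v c).filter (fun z => z.count true = maxOnes [c]) = v ^ [c].count true • zgen 0 1 c := by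
  cases c <;> simp [zgen, δ, maxOnes, Finsupp.filter_add,
    Finsupp.filter_single_of_pos, Finsupp.filter_single_of_neg]

theorem count_le_of_mem_support_Kuv (u v : ℚ) (w : List Bool) :
    ∀ z ∈ (Kuv u v w).support, z.count true ≤ maxOnes w := by
  induction w with
  | nil =>
    intro z hz
    rw [Kuv, List.map_nil, Klist, δ, Finsupp.support_single _ one_ne_zero,
      Finset.mem_singleton] at hz
    simp [hz, maxOnes]
  | cons c w ih =>
    intro z hz
    rw [Kuv_cons] at hz
    obtain ⟨x, hx, y, hy, hxy⟩ := exists_of_mem_support_half hz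
    have := count_le_of_mem_support_zgen u v c x hx
    have := ih y hy
    rw [maxOnes_cons]
    omega

theorem filter_Kuv (u v : ℚ) (w : List Bool) :
    (Kuv u v w).filter (fun z => z.count true = maxOnes w) = v ^ w.count true • Kuv 0 1 w := by
  induction w with
  | nil =>
    rw [List.count_nil, pow_zero, one_smul]
    exact Finsupp.filter_single_of_pos _ rfl
  | cons c w ih =>
    rw [Kuv_cons, maxOnes_cons, filter_count_half (count_le_of_mem_support_zgen u v c)
      (count_le_of_mem_support_Kuv u v w), filter_zgen, ih, half_smul_left, half_smul_right,
      smul_smul, ← Kuv_cons, ← pow_add, ← List.count_append, List.singleton_append]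

/-- For a word `w` over `{2,3}` (with `k` letters `2` and `ℓ` letters `3`, encoded by
`false`/`true`), the component of `K_{u,v}(w)` supported on words with exactly `k + 2ℓ`
letters `1` equals `v^ℓ · K_{0,1}(w)`; if `v ≠ 0` this is a nonzero multiple of `K_{0,1}(w)`. -/
theorem Kuv_leading_term_ones (u v : ℚ) (w : List Bool) :
    Finsupp.filter
        (fun x : Word => x.count true = w.count false + 2 * w.count true)
        (Kuv u v w)
      = v ^ (w.count true) • Kuv 0 1 w ∧
    (v ≠ 0 → v ^ (w.count true) ≠ 0) :=
  ⟨filter_Kuv u v w, pow_ne_zero _⟩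
end
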